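/- Let R be a commutative ring, q ∈ R, and x ∈ R. For all natural numbers n and m, the q-Bell polynomials satisfy the q-analogue of Spivey's formula: B_{n+m,q}(x) = \sum_{j=0}^{m} \sum_{k=0}^{n} S_q(m,j) * C(n,k) * ([j]_q)^{n-k} * q^{j*k} * x^j * B_{k,q}(x) (with the convention 0^0 = 1). (This is equation (result1) of the paper, where the symbol [x]_{q,j} on the coherent state denotes x^j.) -/

import Mathlib

/-- The q-integer [n]_q. -/
def qInt {R : Type*} [CommRing R] (q : R) (n : ℕ) : R :=
  ∑ i ∈ Finset.range n, q ^ i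

/-- The q-Stirling numbers of the second kind. -/
def qStirling {R : Type*} [CommRing R] (q : R) : ℕ → ℕ → R
  | 0, 0 => 1
  | 0, _ + 1 => 0
  | _ + 1, 0 => 0
  | n + 1, k + 1 => q ^ k * qStirling q n k + qInt q (k + 1) * qStirling q n (k + 1)

/-- The q-Bell polynomials. -/
def qBellPoly {R : Type*} [CommRing R] (q x : R) (n : ℕ) : R :=
  ∑ k ∈ Finset.range (n + 1), qStirling q n k * x ^ k


/-!
Let `T` be the operator `p ↦ X p(qX) + X D_q p` on `R[X]`, where `D_q` is the q-derivative, so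
`T X^i = q^i X^(i+1) + [i]_q X^i`; the recurrence for `S_q` says exactly that the coefficients of
`T^n 1` are the `S_q(n,k)`. Since `[j+i]_q = [j]_q + q^j [i]_q`, multiplication by `X^j`
intertwines `[j]_q + q^j T` with `T`, so `T^n (X^j) = X^j ([j]_q + q^j T)^n 1`. Expanding this by
the binomial theorem and applying `T^n` to `T^m 1 = ∑ S_q(m,j) X^j` gives the formula.
-/

open Polynomial

section

variable {R : Type*} [CommRing R] (q : R)

lemma qInt_add (a b : ℕ) : qInt q (a + b) = qInt q a + q ^ a * qInt q b := by
  simp only [qInt, Finset.sum_range_add, pow_add, Finset.mul_sum]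

lemma qStirling_eq_zero_of_lt : ∀ {n k : ℕ}, n < k → qStirling q n k = 0
  | 0, _ + 1, _ => rfl
  | n + 1, k + 1, h => by
    rw [qStirling, qStirling_eq_zero_of_lt (by omega), qStirling_eq_zero_of_lt (by omega)]
    ring

noncomputable def qBellStep : Module.End R R[X] :=
  lsum fun i => LinearMap.toSpanSingleton R R[X] (monomial (i + 1) (q ^ i) + monomial i (qInt q i))

lemma qBellStep_monomial (i : ℕ) (a : R) :
    qBellStep q (monomial i a) = monomial (i + 1) (q ^ i * a) + monomial i (qInt q i * a) := by
  simp [qBellStep, sum_monomial_index, smul_monomial, mul_comm]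

lemma coeff_qBellStep_zero (p : R[X]) : (qBellStep q p).coeff 0 = 0 := by
  induction p using Polynomial.induction_on' with
  | add p r hp hr => simp [hp, hr]
  | monomial i a =>
    simp only [qBellStep_monomial, coeff_add, coeff_monomial]
    split_ifs <;> subst_vars <;> simp_all [qInt]

lemma coeff_qBellStep_succ (p : R[X]) (k : ℕ) :
    (qBellStep q p).coeff (k + 1) = q ^ k * p.coeff k + qInt q (k + 1) * p.coeff (k + 1) := by
  induction p using Polynomial.induction_on' with
  | add p r hp hr => simp only [map_add, coeff_add, hp, hr]; ring
  | monomial i a =>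
    simp only [qBellStep_monomial, coeff_add, coeff_monomial, add_left_inj]
    split_ifs <;> subst_vars <;> first | omega | simp

lemma coeff_qBellStep_pow_one (n k : ℕ) : ((qBellStep q ^ n) 1).coeff k = qStirling q n k := by
  induction n generalizing k with
  | zero => rcases k with _ | k <;> simp [qStirling, coeff_one]
  | succ n ih =>
    rcases k with _ | k
    · simp [pow_succ', coeff_qBellStep_zero, qStirling]
    · rw [pow_succ', Module.End.mul_apply, coeff_qBellStep_succ, ih, ih, qStirling]

lemma natDegree_qBellStep_pow_one_le (n : ℕ) : ((qBellStep q ^ n) 1).natDegree ≤ n :=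
  natDegree_le_iff_coeff_eq_zero.2 fun _ h => by
    rw [coeff_qBellStep_pow_one, qStirling_eq_zero_of_lt q h]

lemma eval_qBellStep_pow_one (x : R) (n : ℕ) :
    ((qBellStep q ^ n) 1).eval x = qBellPoly q x n := by
  rw [eval_eq_sum_range' (Nat.lt_succ_of_le (natDegree_qBellStep_pow_one_le q n))]
  simp only [coeff_qBellStep_pow_one, qBellPoly]

lemma qBellStep_pow_one_eq_sum (n : ℕ) :
    (qBellStep q ^ n) 1 = ∑ j ∈ Finset.range (n + 1), qStirling q n j • X ^ j := by
  conv_lhs =>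
    rw [as_sum_range_C_mul_X_pow' _ (Nat.lt_succ_of_le (natDegree_qBellStep_pow_one_le q n))]
  simp only [coeff_qBellStep_pow_one, C_mul']

lemma semiconjBy_mulLeft_X_pow (j : ℕ) :
    SemiconjBy (LinearMap.mulLeft R (X ^ j : R[X])) (qInt q j • 1 + q ^ j • qBellStep q)
      (qBellStep q) := by
  refine lhom_ext' fun i => LinearMap.ext fun a => ?_
  show _ = _
  simp only [LinearMap.comp_apply, Module.End.mul_apply, LinearMap.mulLeft_apply,
    LinearMap.add_apply, LinearMap.smul_apply, Module.End.one_apply, X_pow_mul_monomial,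
    qBellStep_monomial, smul_monomial, smul_eq_mul, mul_add, smul_add, qInt_add, add_comm i j,
    pow_add]
  rw [show i + 1 + j = j + i + 1 by omega, add_mul, map_add, mul_assoc, mul_assoc]
  abel

lemma qBellStep_pow_X_pow_mul (n j : ℕ) (p : R[X]) :
    (qBellStep q ^ n) (X ^ j * p) = X ^ j * ∑ k ∈ Finset.range (n + 1),
      ((n.choose k : R) * qInt q j ^ (n - k) * q ^ (j * k)) • (qBellStep q ^ k) p := by
  have hcomm : Commute (q ^ j • qBellStep q) (qInt q j • 1) :=
    ((Commute.one_right _).smul_left _).smul_right _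
  have h := ((semiconjBy_mulLeft_X_pow q j).pow_right n).eq
  rw [← LinearMap.mulLeft_apply R, ← Module.End.mul_apply, ← h, Module.End.mul_apply,
    LinearMap.mulLeft_apply, add_comm, hcomm.add_pow]
  simp only [LinearMap.sum_apply, _root_.smul_pow, Module.End.mul_apply, Module.End.natCast_apply,
    LinearMap.smul_apply, one_pow, Module.End.one_apply]
  congr 1
  refine Finset.sum_congr rfl fun k _ => ?_
  rw [← Nat.cast_smul_eq_nsmul R, map_smul, map_smul, smul_smul, smul_smul, pow_mul]
  ring_nf

end

/-- q-analogue of Spivey's Bell number formula for q-Bell polynomials. -/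
theorem spivey_qBell_poly {R : Type*} [CommRing R] (q x : R) (n m : ℕ) :
    qBellPoly q x (n + m) =
      ∑ j ∈ Finset.range (m + 1), ∑ k ∈ Finset.range (n + 1),
        qStirling q m j * (Nat.choose n k : R) * (qInt q j) ^ (n - k) * q ^ (j * k) *
          x ^ j * qBellPoly q x k := by
  rw [← eval_qBellStep_pow_one, pow_add, Module.End.mul_apply, qBellStep_pow_one_eq_sum,
    map_sum, eval_finsetSum]
  refine Finset.sum_congr rfl fun j _ => ?_
  rw [map_smul, ← mul_one (X ^ j : R[X]), qBellStep_pow_X_pow_mul, eval_smul, eval_mul,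
    eval_finsetSum, smul_eq_mul, Finset.mul_sum, Finset.mul_sum]
  refine Finset.sum_congr rfl fun k _ => ?_
  rw [eval_smul, eval_qBellStep_pow_one, eval_pow, eval_X, smul_eq_mul]
  ring
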